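/- arXiv:1411.7718 — 4 statements merged into one kernel-verified Lean document; each statement's English description precedes it below -/
import Mathlib

section
/- Under the asymmetric random classification noise model, the clean conditional probability can be recovered from the noisy one: P(Y=ŷ|X) = (P(Ŷ=ŷ|X) - ρ₋ŷ)/(1 - ρ₋₁ - ρ₊₁) for ŷ ∈ {+1,-1}, where ρ₋ŷ denotes ρ₋₁ if ŷ=+1 and ρ₊₁ if ŷ=-1. -/
/-- ρ₋ŷ : equals ρ₋₁ if ŷ = +1 and ρ₊₁ if ŷ = -1. -/
def negRate (ρp ρm : ℝ) (yh : ℤ) : ℝ := if yh = 1 then ρm else ρp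

lemma negRate_one (ρp ρm : ℝ) : negRate ρp ρm 1 = ρm := if_pos rfl

lemma negRate_neg_one (ρp ρm : ℝ) : negRate ρp ρm (-1) = ρp := if_neg (by decide)

/-- Since `q = 1 - p`, the mixture is affine in `p`: `n = b + (1 - b - a) p`. -/
lemma eq_div_of_add_eq_one_of_mix_eq {K : Type*} [Field K] {p q n a b : K}
    (hpq : p + q = 1) (hn : n = (1 - a) * p + b * q) (hab : 1 - b - a ≠ 0) :
    p = (n - b) / (1 - b - a) := by
  rw [eq_div_iff hab]
  linear_combination -hn - b * hpq

theorem clean_posterior_recovery_general {X : Type*}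
    (pclean pnoisy : ℤ → X → ℝ) (ρp ρm : ℝ)
    (hsum : ρp + ρm < 1)
    (hpc : ∀ x, 0 ≤ pclean 1 x ∧ 0 ≤ pclean (-1) x ∧ pclean 1 x + pclean (-1) x = 1)
    (hmodelPos : ∀ x, pnoisy 1 x = (1 - ρp) * pclean 1 x + ρm * pclean (-1) x)
    (hmodelNeg : ∀ x, pnoisy (-1) x = ρp * pclean 1 x + (1 - ρm) * pclean (-1) x) :
    ∀ yh : ℤ, (yh = 1 ∨ yh = -1) → ∀ x,
      pclean yh x = (pnoisy yh x - negRate ρp ρm yh) / (1 - ρm - ρp) := by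
  intro yh hyh x
  have hden : 1 - ρm - ρp ≠ 0 := by linarith
  obtain ⟨-, -, hpc_sum⟩ := hpc x
  rcases hyh with rfl | rfl
  · rw [negRate_one]
    exact eq_div_of_add_eq_one_of_mix_eq hpc_sum (hmodelPos x) hden
  · rw [negRate_neg_one, sub_right_comm 1 ρm ρp]
    exact eq_div_of_add_eq_one_of_mix_eq ((add_comm _ _).trans hpc_sum)
      ((hmodelNeg x).trans (add_comm _ _)) ((sub_right_comm 1 ρp ρm).trans_ne hden)

/-- Under asymmetric RCN, P(Y=ŷ|X) = (P(Ŷ=ŷ|X) - ρ₋ŷ)/(1-ρ₋₁-ρ₊₁). -/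
theorem clean_posterior_recovery {X : Type*}
    (pclean pnoisy : ℤ → X → ℝ) (ρp ρm : ℝ)
    (hρp : 0 ≤ ρp) (hρm : 0 ≤ ρm) (hsum : ρp + ρm < 1)
    (hpc : ∀ x, 0 ≤ pclean 1 x ∧ 0 ≤ pclean (-1) x ∧ pclean 1 x + pclean (-1) x = 1)
    (hmodelPos : ∀ x, pnoisy 1 x = (1 - ρp) * pclean 1 x + ρm * pclean (-1) x)
    (hmodelNeg : ∀ x, pnoisy (-1) x = ρp * pclean 1 x + (1 - ρm) * pclean (-1) x) :
    ∀ yh : ℤ, (yh = 1 ∨ yh = -1) → ∀ x,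
      pclean yh x = (pnoisy yh x - negRate ρp ρm yh) / (1 - ρm - ρp) :=
  clean_posterior_recovery_general pclean pnoisy ρp ρm hsum hpc hmodelPos hmodelNeg
end

section
/- Under the asymmetric random classification noise model, the importance weight β(X,ŷ) := P(Y=ŷ|X)/P(Ŷ=ŷ|X) equals (P(Ŷ=ŷ|X) - ρ₋ŷ)/((1-ρ₊₁-ρ₋₁)·P(Ŷ=ŷ|X)) whenever P(Ŷ=ŷ|X) ≠ 0, and this weight is nonnegative. -/
/-- the importance weight β(X,ŷ) = P(Y=ŷ|X)/P(Ŷ=ŷ|X) equals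
(P(Ŷ=ŷ|X) - ρ₋ŷ)/((1-ρ₊₁-ρ₋₁)·P(Ŷ=ŷ|X)) whenever P(Ŷ=ŷ|X) ≠ 0, and is nonnegative. -/
theorem importance_weight_formula {X : Type*}
    (pclean pnoisy : ℤ → X → ℝ) (ρp ρm : ℝ)
    (hρp : 0 ≤ ρp) (hρm : 0 ≤ ρm) (hsum : ρp + ρm < 1)
    (hpc : ∀ x, 0 ≤ pclean 1 x ∧ 0 ≤ pclean (-1) x ∧ pclean 1 x + pclean (-1) x = 1)
    (hmodelPos : ∀ x, pnoisy 1 x = (1 - ρp) * pclean 1 x + ρm * pclean (-1) x)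
    (hmodelNeg : ∀ x, pnoisy (-1) x = ρp * pclean 1 x + (1 - ρm) * pclean (-1) x) :
    ∀ yh : ℤ, (yh = 1 ∨ yh = -1) → ∀ x, pnoisy yh x ≠ 0 →
      pclean yh x / pnoisy yh x
        = (pnoisy yh x - negRate ρp ρm yh) / ((1 - ρp - ρm) * pnoisy yh x)
      ∧ 0 ≤ pclean yh x / pnoisy yh x := by
  intro yh hyh x hne
  obtain ⟨h1, h2, h3⟩ := hpc x
  have hs : (0:ℝ) < 1 - ρp - ρm := by linarith
  have hρp1 : ρp < 1 := by linarith
  have hρm1 : ρm < 1 := by linarith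
  rcases hyh with rfl | rfl
  · have hkey : pnoisy 1 x - negRate ρp ρm 1 = (1 - ρp - ρm) * pclean 1 x := by
      norm_num [negRate]
      rw [hmodelPos x]; nlinarith
    have hpn : 0 ≤ pnoisy 1 x := by
      rw [hmodelPos x]; nlinarith
    constructor
    · rw [hkey, mul_div_mul_left _ _ (ne_of_gt hs)]
    · exact div_nonneg h1 hpn
  · have hkey : pnoisy (-1) x - negRate ρp ρm (-1) = (1 - ρp - ρm) * pclean (-1) x := by
      simp only [negRate]
      norm_num
      rw [hmodelNeg x]; nlinarith
    have hpn : 0 ≤ pnoisy (-1) x := by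
      rw [hmodelNeg x]; nlinarith
    constructor
    · rw [hkey, mul_div_mul_left _ _ (ne_of_gt hs)]
    · exact div_nonneg h2 hpn
end

section
/- If there exists x₋₁ with P(Y=+1|x₋₁)=0 and x₊₁ with P(Y=-1|x₊₁)=0, then the noise rates attain the lower bounds: ρ₋₁ = P(Ŷ=+1|x₋₁), ρ₊₁ = P(Ŷ=-1|x₊₁), and consequently ρ₋ŷ = min over X of P(Ŷ=ŷ|X). -/
/-- if P(Y=+1|x₋₁)=0 and P(Y=-1|x₊₁)=0 for some points, then
ρ₋₁ = P(Ŷ=+1|x₋₁), ρ₊₁ = P(Ŷ=-1|x₊₁), and ρ₋ŷ = min_X P(Ŷ=ŷ|X). -/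
theorem noise_rate_attained {X : Type*}
    (pclean pnoisy : ℤ → X → ℝ) (ρp ρm : ℝ)
    (hρp : 0 ≤ ρp) (hρm : 0 ≤ ρm) (hsum : ρp + ρm < 1)
    (hpc : ∀ x, 0 ≤ pclean 1 x ∧ 0 ≤ pclean (-1) x ∧ pclean 1 x + pclean (-1) x = 1)
    (hmodelPos : ∀ x, pnoisy 1 x = (1 - ρp) * pclean 1 x + ρm * pclean (-1) x)
    (hmodelNeg : ∀ x, pnoisy (-1) x = ρp * pclean 1 x + (1 - ρm) * pclean (-1) x)
    (xm xp : X)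
    (hxm : pclean 1 xm = 0) (hxp : pclean (-1) xp = 0) :
    ρm = pnoisy 1 xm ∧ ρp = pnoisy (-1) xp ∧
      ∀ yh : ℤ, (yh = 1 ∨ yh = -1) →
        IsLeast {r : ℝ | ∃ x, r = pnoisy yh x} (negRate ρp ρm yh) := by
  have hm1 : pclean (-1) xm = 1 := by
    have := (hpc xm).2.2; linarith
  have hp1 : pclean 1 xp = 1 := by
    have := (hpc xp).2.2; linarith
  have e1 : ρm = pnoisy 1 xm := by
    rw [hmodelPos xm, hxm, hm1]; ring
  have e2 : ρp = pnoisy (-1) xp := by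
    rw [hmodelNeg xp, hxp, hp1]; ring
  refine ⟨e1, e2, ?_⟩
  rintro yh (rfl | rfl)
  · refine ⟨⟨xm, by simpa [negRate] using e1⟩, ?_⟩
    rintro r ⟨x, rfl⟩
    obtain ⟨h1, h2, h3⟩ := hpc x
    have hn : negRate ρp ρm 1 = ρm := by norm_num [negRate]
    rw [hn, hmodelPos x]
    nlinarith
  · refine ⟨⟨xp, by simpa [negRate] using e2⟩, ?_⟩
    rintro r ⟨x, rfl⟩
    obtain ⟨h1, h2, h3⟩ := hpc x
    have : negRate ρp ρm (-1) = ρp := by norm_num [negRate]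
    rw [this, hmodelNeg x]
    nlinarith
end

section
/- Under the asymmetric RCN model, the class-conditional densities of the noisy data satisfy the mixture identity P(X|Ŷ=ŷ) = (1 - π_ŷ/(1-π_{-ŷ}))·P(X|Y=ŷ) + (π_ŷ/(1-π_{-ŷ}))·P(X|Ŷ=-ŷ), from which it follows that π_ŷ/(1-π_{-ŷ}) ≤ inf_X P(X|Ŷ=ŷ)/P(X|Ŷ=-ŷ) whenever P(X|Ŷ=-ŷ)>0, with equality if there exists x with P(x|Y=ŷ)=0. -/
/-- from the mixture identity
P(X|Ŷ=ŷ) = (1 - π_ŷ/(1-π_{-ŷ}))·P(X|Y=ŷ) + (π_ŷ/(1-π_{-ŷ}))·P(X|Ŷ=-ŷ),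
we get π_ŷ/(1-π_{-ŷ}) ≤ inf_X P(X|Ŷ=ŷ)/P(X|Ŷ=-ŷ) (over X with P(X|Ŷ=-ŷ)>0),
with equality (the infimum is attained at the bound) if some x has P(x|Y=ŷ)=0. -/
theorem mixture_slope_bound {𝒳 : Type*}
    (pX qX : ℤ → 𝒳 → ℝ) (π : ℤ → ℝ)
    (hπp : 0 ≤ π 1) (hπm : 0 ≤ π (-1)) (hπsum : π 1 + π (-1) < 1)
    (hq : ∀ yh x, 0 ≤ qX yh x)
    (hmix : ∀ yh x, (yh = 1 ∨ yh = -1) →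
      pX yh x = (1 - π yh / (1 - π (-yh))) * qX yh x
        + (π yh / (1 - π (-yh))) * pX (-yh) x) :
    ∀ yh : ℤ, (yh = 1 ∨ yh = -1) →
      ((∀ x, 0 < pX (-yh) x → π yh / (1 - π (-yh)) ≤ pX yh x / pX (-yh) x)
      ∧ ((∃ x0, qX yh x0 = 0 ∧ 0 < pX (-yh) x0) →
          IsLeast {r : ℝ | ∃ x, 0 < pX (-yh) x ∧ r = pX yh x / pX (-yh) x}
            (π yh / (1 - π (-yh))))) := by
  intro yh hyh
  have ha : 0 ≤ π yh := by rcases hyh with h | h <;> simp [h, hπp, hπm]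
  have hab : π yh + π (-yh) < 1 := by
    rcases hyh with h | h <;> simp [h] <;> linarith
  have hb : 0 ≤ π (-yh) := by rcases hyh with h | h <;> simp [h, hπp, hπm]
  have h1b : 0 < 1 - π (-yh) := by linarith
  set r := π yh / (1 - π (-yh)) with hr
  have hr0 : 0 ≤ r := div_nonneg ha h1b.le
  have hr1 : 1 - r ≥ 0 := by
    have : r ≤ 1 := by
      rw [hr, div_le_one h1b]; linarith
    linarith
  have key : ∀ x, 0 < pX (-yh) x → r ≤ pX yh x / pX (-yh) x := by
    intro x hx
    rw [le_div_iff₀ hx]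
    have := hmix yh x hyh
    nlinarith [mul_nonneg hr1 (hq yh x)]
  refine ⟨key, ?_⟩
  rintro ⟨x0, hq0, hp0⟩
  constructor
  · refine ⟨x0, hp0, ?_⟩
    have heq : pX yh x0 = r * pX (-yh) x0 := by
      rw [hmix yh x0 hyh, hq0]; ring
    rw [heq, mul_div_assoc, div_self hp0.ne', mul_one]
  · rintro s ⟨x, hx, rfl⟩
    exact key x hx
end
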